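/- arXiv:2409.09657 — 3 statements merged into one kernel-verified Lean document; each statement's English description precedes it below -/
import Mathlib

section
/- Let x₁,...,x_k and y₁,y₂,... be elements of a commutative ring, and define the falling product (x|y)^p := ∏_{a=1}^p (x − y_a) for p ≥ 0. Then det(((x_i|y)^{k−j})_{1≤i,j≤k}) = ∏_{1≤i<j≤k} (x_i − x_j); in particular the determinant is independent of the y variables. -/
open Polynomial Finset

/-- With the falling products `(x|y)^p = ∏_{a=1}^p (x - y_a)`, the determinant of the
matrix with `(i,j)` entry `(x_i|y)^{k-j}` equals the Vandermonde product
`∏_{i<j} (x_i - x_j)`; in particular it does not depend on the `y` variables.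
With `0`-indexed `i, j : Fin k` the `(i,j)` entry is `∏_{a < k-1-j} (x i - y a)`. -/
theorem det_falling_vandermonde (R : Type*) [CommRing R] (k : ℕ)
    (x : Fin k → R) (y : ℕ → R) :
    Matrix.det (Matrix.of fun i j : Fin k =>
        ∏ a ∈ Finset.range (k - 1 - (j : ℕ)), (x i - y a)) =
      ∏ i : Fin k, ∏ j ∈ Finset.Ioi i, (x i - x j) := by
  rcases subsingleton_or_nontrivial R with hR | hR
  · exact Subsingleton.elim _ _
  set p : Fin k → R[X] := fun j => ∏ a ∈ Finset.range (j : ℕ), (X - C (y a)) with hp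
  have h_deg : ∀ j : Fin k, (p j).natDegree = j := by
    intro j
    simp [hp, Polynomial.natDegree_prod_of_monic _ _ (fun a _ => monic_X_sub_C (y a)),
      Polynomial.natDegree_X_sub_C, Polynomial.natDegree_X]
  have h_monic : ∀ j : Fin k, (p j).Monic := fun j =>
    monic_prod_of_monic _ _ (fun a _ => monic_X_sub_C (y a))
  have key := Matrix.det_eval_matrixOfPolynomials_eq_det_vandermonde (x ∘ Fin.rev) p h_deg h_monic
  have hM : Matrix.of (fun i j : Fin k =>
        ∏ a ∈ Finset.range (k - 1 - (j : ℕ)), (x i - y a)) =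
      (Matrix.of (fun i j : Fin k => (p j).eval ((x ∘ Fin.rev) i))).submatrix
        ⇑Fin.revPerm ⇑Fin.revPerm := by
    ext i j
    simp only [Matrix.submatrix_apply, Matrix.of_apply, Function.comp_apply, Equiv.coe_fn_mk, Fin.revPerm_apply, Fin.rev_rev, hp,
      Polynomial.eval_prod, Polynomial.eval_sub, Polynomial.eval_X, Polynomial.eval_C,
      Fin.val_rev, Nat.sub_sub, Nat.add_comm 1]
  rw [hM, Matrix.det_submatrix_equiv_self Fin.revPerm,
    ← key, Matrix.det_vandermonde]
  rw [Finset.prod_sigma', Finset.prod_sigma']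
  refine Finset.prod_bij (fun a _ => ⟨a.2.rev, a.1.rev⟩) ?_ ?_ ?_ ?_
  · rintro ⟨i, j⟩ h
    simp only [Finset.mem_sigma, Finset.mem_univ, Finset.mem_Ioi] at h ⊢
    exact ⟨trivial, Fin.rev_lt_rev.mpr h.2⟩
  · rintro ⟨i, j⟩ hi ⟨i', j'⟩ hj h
    simp only [Sigma.mk.inj_iff] at h
    obtain ⟨h1, h2⟩ := h
    have := Fin.rev_injective h1
    have := Fin.rev_injective (heq_iff_eq.mp h2)
    simp_all
  · rintro ⟨i, j⟩ h
    refine ⟨⟨j.rev, i.rev⟩, ?_, by simp⟩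
    simp only [Finset.mem_sigma, Finset.mem_univ, Finset.mem_Ioi] at h ⊢
    exact ⟨trivial, Fin.rev_lt_rev.mpr h.2⟩
  · rintro ⟨i, j⟩ h
    simp [Function.comp]
end

section
/- Let z₁,...,z_n be pairwise distinct elements of a field K, and let f(x₁,...,x_k) be a symmetric polynomial over K with partial degree at most n−k in each variable. For each k-element subset I = {i₁<...<i_k} of {1,...,n}, write z_I = (z_{i₁},...,z_{i_k}) and let z_{I^c} denote the elements outside I. Then f(x₁,...,x_k) = Σ_I f(z_I) · V(x; I)/R(I), where V(x;I) = ∏_{j=1}^k ∏_{b ∉ I} (x_j − z_b) and R(I) = ∏_{a ∈ I} ∏_{b ∉ I} (z_a − z_b), the sum ranging over all k-element subsets I. -/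
open MvPolynomial

/-- A polynomial in `k` variables with partial degrees `≤ n - k` that vanishes at every
injective tuple of `n` pairwise-distinct nodes is zero. -/
lemma vanish_of_eval_inj_zero (K : Type*) [Field K] :
    ∀ (k n : ℕ) (z : Fin n → K), Function.Injective z →
    ∀ (p : MvPolynomial (Fin k) K), (∀ i, p.degreeOf i ≤ n - k) → k ≤ n →
    (∀ σ : Fin k → Fin n, Function.Injective σ → eval (z ∘ σ) p = 0) → p = 0 := by
  intro k
  induction k with
  | zero =>
      intro n z hz p _ _ hvan
      have h0 := hvan Fin.elim0 (fun a => a.elim0)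
      rw [eq_C_of_isEmpty p] at h0 ⊢
      rw [eval_C] at h0
      rw [h0, map_zero]
  | succ k IH =>
      intro n z hz p hdeg hkn hvan
      have hq : finSuccEquiv K k p = 0 := by
        apply Polynomial.ext
        intro m
        rw [Polynomial.coeff_zero]
        apply IH n z hz
        · intro j
          refine (degreeOf_coeff_finSuccEquiv p j m).trans ?_
          exact (hdeg j.succ).trans (by omega)
        · omega
        · intro σ hσ
          have hP : Polynomial.map (eval (z ∘ σ)) (finSuccEquiv K k p) = 0 := by
            set s : Finset (Fin n) := Finset.univ \ Finset.image σ Finset.univ with hs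
            have hscard : s.card = n - k := by
              rw [hs, Finset.card_sdiff_of_subset (Finset.subset_univ _), Finset.card_univ,
                Finset.card_image_of_injective _ hσ, Finset.card_univ,
                Fintype.card_fin, Fintype.card_fin]
            apply Polynomial.eq_zero_of_natDegree_lt_card_of_eval_eq_zero _
              (f := fun b : s => z b.1)
              (hz.comp Subtype.val_injective)
            · intro b
              have hb : b.1 ∉ Finset.image σ Finset.univ := by
                have := b.2
                simp only [hs, Finset.mem_sdiff] at this
                exact this.2
              have hinj : Function.Injective (Fin.cons b.1 σ : Fin (k + 1) → Fin n) := by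
                apply Fin.cons_injective_of_injective _ hσ
                intro hmem
                apply hb
                obtain ⟨j, hj⟩ := hmem
                exact Finset.mem_image.2 ⟨j, Finset.mem_univ j, hj⟩
              have hcomp : (z ∘ Fin.cons b.1 σ : Fin (k + 1) → K)
                  = Fin.cons (z b.1) (z ∘ σ) := by
                funext i
                refine Fin.cases ?_ ?_ i <;> simp
              have := hvan (Fin.cons b.1 σ) hinj
              rw [hcomp] at this
              rw [← eval_eq_eval_mv_eval']
              exact this
            · calc (Polynomial.map (eval (z ∘ σ)) (finSuccEquiv K k p)).natDegree
                  ≤ (finSuccEquiv K k p).natDegree := Polynomial.natDegree_map_le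
                _ = p.degreeOf 0 := natDegree_finSuccEquiv p
                _ ≤ n - (k + 1) := hdeg 0
                _ < n - k := by omega
                _ = Fintype.card s := by rw [Fintype.card_coe, hscard]
          have := congrArg (fun q => Polynomial.coeff q m) hP
          simpa [Polynomial.coeff_map] using this
      have := congrArg (finSuccEquiv K k).symm hq
      simpa using this


/-- Interpolation identity for symmetric polynomials (Chen–Louck):
if `z₁,...,z_n` are pairwise distinct elements of a field and `f(x₁,...,x_k)` is a
symmetric polynomial with partial degree at most `n - k` in each variable, then
`f(x) = Σ_I f(z_I) · V(x;I)/R(I)`, the sum running over all `k`-element subsets `I`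
of `{1,...,n}`, where `z_I` lists the `z_i`, `i ∈ I`, in increasing order,
`V(x;I) = ∏_{j=1}^k ∏_{b ∉ I} (x_j - z_b)` and `R(I) = ∏_{a ∈ I} ∏_{b ∉ I} (z_a - z_b)`.
Here `k`-element subsets are encoded by their strictly monotone enumerations
`g : Fin k → Fin n`. -/
theorem symmetric_interpolation (n k : ℕ) (hk : k ≤ n) (K : Type*) [Field K]
    (z : Fin n → K) (hz : Function.Injective z)
    (f : MvPolynomial (Fin k) K) (hsym : f.IsSymmetric)
    (hdeg : ∀ i : Fin k, f.degreeOf i ≤ n - k) (x : Fin k → K) :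
    eval x f =
      ∑ g : {g : Fin k → Fin n // StrictMono g},
        eval (fun j => z (g.1 j)) f *
          ((∏ j : Fin k, ∏ b ∈ Finset.univ \ Finset.image g.1 Finset.univ, (x j - z b)) /
            (∏ j : Fin k, ∏ b ∈ Finset.univ \ Finset.image g.1 Finset.univ,
              (z (g.1 j) - z b))) := by
  classical
  set S := {g : Fin k → Fin n // StrictMono g} with hS
  set cp : (Fin k → Fin n) → Finset (Fin n) :=
    fun g => Finset.univ \ Finset.image g Finset.univ with hcp
  set V : (Fin k → Fin n) → MvPolynomial (Fin k) K :=
    fun g => ∏ j : Fin k, ∏ b ∈ cp g, (X j - C (z b)) with hV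
  set Rg : (Fin k → Fin n) → K :=
    fun g => ∏ j : Fin k, ∏ b ∈ cp g, (z (g j) - z b) with hRg
  set G : MvPolynomial (Fin k) K :=
    ∑ g : S, C (eval (z ∘ g.1) f * (Rg g.1)⁻¹) * V g.1 with hG
  -- basic facts
  have hmemcp : ∀ (g : Fin k → Fin n) (j : Fin k) (b : Fin n), b ∈ cp g → g j ≠ b := by
    intro g j b hb heq
    rw [hcp, Finset.mem_sdiff] at hb
    exact hb.2 (Finset.mem_image.2 ⟨j, Finset.mem_univ j, heq⟩)
  have hRne : ∀ g : Fin k → Fin n, Rg g ≠ 0 := by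
    intro g
    rw [hRg]
    apply Finset.prod_ne_zero_iff.2
    intro j _
    apply Finset.prod_ne_zero_iff.2
    intro b hb
    exact sub_ne_zero.2 (fun h => hmemcp g j b hb (hz h))
  have hcpcard : ∀ g : Fin k → Fin n, Function.Injective g → (cp g).card = n - k := by
    intro g hg
    rw [hcp, Finset.card_sdiff_of_subset (Finset.subset_univ _), Finset.card_univ,
      Finset.card_image_of_injective _ hg, Finset.card_univ, Fintype.card_fin, Fintype.card_fin]
  have hevalV : ∀ (y : Fin k → K) (g : Fin k → Fin n),
      eval y (V g) = ∏ j : Fin k, ∏ b ∈ cp g, (y j - z b) := by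
    intro y g
    rw [hV]
    simp [map_prod]
  -- evaluation of V at a different strictly monotone tuple is zero
  have hVzero : ∀ g τ : S, τ ≠ g → eval (z ∘ τ.1) (V g.1) = 0 := by
    intro g τ hne
    have hex : ∃ j : Fin k, τ.1 j ∈ cp g.1 := by
      by_contra hno
      push_neg at hno
      have hsub : Finset.image τ.1 Finset.univ ⊆ Finset.image g.1 Finset.univ := by
        intro b hb
        obtain ⟨j, _, rfl⟩ := Finset.mem_image.1 hb
        have := hno j
        rw [hcp, Finset.mem_sdiff, not_and, not_not] at this
        exact this (Finset.mem_univ _)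
      have hcards : (Finset.image g.1 Finset.univ).card ≤ (Finset.image τ.1 Finset.univ).card := by
        rw [Finset.card_image_of_injective _ g.2.injective,
          Finset.card_image_of_injective _ τ.2.injective]
      have heqim := Finset.eq_of_subset_of_card_le hsub hcards
      have hrange : Set.range τ.1 = Set.range g.1 := by
        rw [← Set.image_univ, ← Set.image_univ, ← Finset.coe_univ, ← Finset.coe_image,
          ← Finset.coe_image, heqim]
      haveI : WellFoundedLT (Fin k) := inferInstance
      exact hne (Subtype.ext ((StrictMono.range_inj τ.2 g.2).1 hrange))
    obtain ⟨j, hj⟩ := hex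
    rw [hevalV]
    apply Finset.prod_eq_zero (Finset.mem_univ j)
    apply Finset.prod_eq_zero hj
    simp
  have hVself : ∀ g : S, eval (z ∘ g.1) (V g.1) = Rg g.1 := by
    intro g
    rw [hevalV]
    rfl
  -- G interpolates f at the nodes
  have hGnodes : ∀ τ : S, eval (z ∘ τ.1) G = eval (z ∘ τ.1) f := by
    intro τ
    rw [hG, map_sum]
    rw [Fintype.sum_eq_single τ]
    · rw [map_mul, eval_C, hVself, mul_assoc, inv_mul_cancel₀ (hRne τ.1), mul_one]
    · intro g hgne
      rw [map_mul, hVzero g τ (Ne.symm hgne), mul_zero]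
  -- degree bound for G
  have hdegV : ∀ (g : Fin k → Fin n), Function.Injective g →
      ∀ i, degreeOf i (V g) ≤ n - k := by
    intro g hg i
    rw [hV]
    refine (degreeOf_prod_le i _ _).trans ?_
    have hterm : ∀ j : Fin k,
        degreeOf i (∏ b ∈ cp g, (X j - C (z b))) ≤ if i = j then n - k else 0 := by
      intro j
      refine (degreeOf_prod_le i _ _).trans ?_
      have hfac : ∀ b ∈ cp g, degreeOf i ((X j - C (z b)) : MvPolynomial (Fin k) K)
          ≤ if i = j then 1 else 0 := by
        intro b _
        rw [sub_eq_add_neg, ← map_neg C]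
        refine (degreeOf_add_le i _ _).trans ?_
        rw [degreeOf_X, degreeOf_C]
        simp
      refine (Finset.sum_le_sum hfac).trans ?_
      rw [Finset.sum_const, smul_eq_mul]
      by_cases h : i = j
      · simp [h, hcpcard g hg]
      · simp [h]
    refine (Finset.sum_le_sum (fun j _ => hterm j)).trans ?_
    rw [Finset.sum_ite_eq]
    simp
  have hdegG : ∀ i, degreeOf i G ≤ n - k := by
    intro i
    rw [hG]
    refine (degreeOf_sum_le i _ _).trans ?_
    apply Finset.sup_le
    intro g _
    refine (degreeOf_mul_le i _ _).trans ?_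
    rw [degreeOf_C, zero_add]
    exact hdegV g.1 g.2.injective i
  -- symmetry of G
  have hGsym : G.IsSymmetric := by
    intro π
    rw [hG, map_sum]
    apply Finset.sum_congr rfl
    intro g _
    rw [map_mul, rename_C]
    congr 1
    rw [hV, map_prod]
    have : ∀ j : Fin k, (rename π) (∏ b ∈ cp g.1, (X j - C (z b)))
        = ∏ b ∈ cp g.1, (X (π j) - C (z b)) := by
      intro j
      rw [map_prod]
      apply Finset.prod_congr rfl
      intro b _
      rw [map_sub, rename_X, rename_C]
    simp_rw [this]
    exact Equiv.prod_comp π (fun j => ∏ b ∈ cp g.1, (X j - C (z b)))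
  -- the difference vanishes
  have hdegD : ∀ i, degreeOf i (f - G) ≤ n - k := by
      intro i
      rw [sub_eq_add_neg]
      refine (degreeOf_add_le i _ _).trans ?_
      have hnegG : degreeOf i (-G) ≤ n - k := by
        have : -G = C (-1 : K) * G := by rw [map_neg, map_one, neg_one_mul]
        rw [this]
        refine (degreeOf_mul_le i _ _).trans ?_
        rw [degreeOf_C, zero_add]
        exact hdegG i
      exact max_le (hdeg i) hnegG
  have hD : f - G = 0 := by
    apply vanish_of_eval_inj_zero K k n z hz _ hdegD hk
    · intro σ hσ
      set s : Finset (Fin n) := Finset.image σ Finset.univ with hs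
      have hscard : s.card = k := by
        rw [hs, Finset.card_image_of_injective _ hσ, Finset.card_univ, Fintype.card_fin]
      set g0 : Fin k → Fin n := fun j => s.orderEmbOfFin hscard j with hg0
      have hg0mono : StrictMono g0 := (s.orderEmbOfFin hscard).strictMono
      set π : Fin k → Fin k :=
        fun j => (s.orderIsoOfFin hscard).symm
          ⟨σ j, by rw [hs]; exact Finset.mem_image.2 ⟨j, Finset.mem_univ j, rfl⟩⟩ with hπ
      have hg0π : ∀ j, g0 (π j) = σ j := by
        intro j
        simp only [hg0, hπ]
        rw [← Finset.coe_orderIsoOfFin_apply, OrderIso.apply_symm_apply]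
      have hπinj : Function.Injective π := by
        intro a b hab
        apply hσ
        rw [← hg0π a, ← hg0π b, hab]
      have hπbij : Function.Bijective π := Finite.injective_iff_bijective.1 hπinj
      set πe : Equiv.Perm (Fin k) := Equiv.ofBijective π hπbij with hπe
      have hcomp : (z ∘ σ) = (z ∘ g0) ∘ πe := by
        funext j
        simp only [Function.comp_apply, hπe, Equiv.ofBijective_apply, hg0π]
      have hDsym : rename πe (f - G) = f - G := by
        rw [map_sub, hsym πe, hGsym πe]
      rw [hcomp, ← eval_rename, hDsym, map_sub, hGnodes ⟨g0, hg0mono⟩, sub_self]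
  -- conclude
  have hfG : f = G := by
    have := sub_eq_zero.1 hD
    exact this
  rw [show eval x f = eval x G from by rw [hfG], hG, map_sum]
  apply Finset.sum_congr rfl
  intro g _
  rw [map_mul, eval_C, hevalV]
  have : eval (z ∘ g.1) f = eval (fun j => z (g.1 j)) f := rfl
  rw [this]
  simp only [hcp, hRg]
  rw [div_eq_mul_inv]
  ring
end

section
/- Let z₁,...,z_n be pairwise distinct elements of a field and m a nonnegative integer. Then Σ_{j=1}^n z_j^m / ∏_{i ≠ j} (z_j − z_i) equals 0 if m < n − 1, equals 1 if m = n − 1, and equals the complete homogeneous symmetric polynomial h_{m−n+1}(z₁,...,z_n) if m ≥ n − 1. -/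
open Finset

/-- The complete homogeneous symmetric polynomial `h_d(z₁,...,z_n)`, expressed as the
sum over weakly increasing tuples `f : Fin d → Fin n` of `∏ i, z (f i)`. -/
def completeHomogeneous {K : Type*} [CommRing K] (n d : ℕ) (z : Fin n → K) : K :=
  ∑ f ∈ (Finset.univ : Finset (Fin d → Fin n)).filter Monotone, ∏ i, z (f i)

/-!
The sum is the divided difference `f[z₁, …, z_n]` of `f x = x ^ m`. For `m < n` it is the
coefficient of `X ^ (n - 1)` in the Lagrange interpolant of `X ^ m`, which is `X ^ m` itself.
Beyond that range, multiplying `f` by `x` gives the Leibniz-type rule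
`(x f)[z₀, …, z_n] = f[z₁, …, z_n] + z₀ f[z₀, …, z_n]`, and `h` obeys the same recursion
`h_{d+1}(z₀, …, z_n) = h_{d+1}(z₁, …, z_n) + z₀ h_d(z₀, …, z_n)`, obtained by sorting the
monotone tuples according to whether they start at `0`; induction on `n` and `d` finishes.
-/

open Polynomial Function

theorem Fin.prod_univ_erase {M : Type*} [CommMonoid M] {n : ℕ} (g : Fin (n + 1) → M)
    (j : Fin (n + 1)) :
    ∏ i ∈ univ.erase j, g i = ∏ i : Fin n, g (j.succAbove i) := by
  rw [Fin.univ_succAbove n j, erase_cons, prod_map, Fin.coe_succAboveEmb]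

theorem Fin.prod_univ_erase_succ {M : Type*} [CommMonoid M] {n : ℕ} (g : Fin (n + 1) → M)
    (k : Fin n) :
    ∏ i ∈ univ.erase k.succ, g i = g 0 * ∏ i ∈ univ.erase k, g i.succ := by
  cases n with
  | zero => exact k.elim0
  | succ n =>
    simp only [Fin.prod_univ_erase, Fin.prod_univ_succ, Fin.succ_succAbove_zero,
      Fin.succ_succAbove_succ]

theorem Fin.monotone_cons_zero {n d : ℕ} {g : Fin d → Fin (n + 1)} :
    Monotone (Fin.cons 0 g : Fin (d + 1) → Fin (n + 1)) ↔ Monotone g := by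
  rw [monotone_iff_forall_lt, monotone_iff_forall_lt]
  exact (Fin.liftFun_cons (· ≤ ·)).trans (and_iff_right fun i ↦ Fin.zero_le _)

section CompleteHomogeneous

variable {K : Type*} [CommRing K]

theorem completeHomogeneous_zero_right (n : ℕ) (z : Fin n → K) :
    completeHomogeneous n 0 z = 1 := by
  simp [completeHomogeneous, Subsingleton.monotone]

theorem completeHomogeneous_zero_succ (d : ℕ) (z : Fin 0 → K) :
    completeHomogeneous 0 (d + 1) z = 0 := by
  simp [completeHomogeneous]

theorem completeHomogeneous_tail_eq_sum (n d : ℕ) (z : Fin (n + 1) → K) :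
    completeHomogeneous n (d + 1) (Fin.tail z) =
      ∑ f ∈ (univ.filter Monotone).filter (fun f : Fin (d + 1) → Fin (n + 1) ↦ f 0 ≠ 0),
        ∏ i, z (f i) := by
  refine sum_bij' (fun g _ ↦ Fin.succ ∘ g) (fun f hf i ↦ (f i).pred ?_) ?_ ?_ ?_ ?_ ?_
  · simp only [mem_filter, mem_univ, true_and] at hf
    exact Fin.pos_iff_ne_zero.1 ((Fin.pos_iff_ne_zero.2 hf.2).trans_le (hf.1 (Fin.zero_le i)))
  · intro g hg
    simp only [mem_filter, mem_univ, true_and] at hg ⊢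
    exact ⟨Fin.strictMono_succ.monotone.comp hg, Fin.succ_ne_zero _⟩
  · intro f hf
    simp only [mem_filter, mem_univ, true_and] at hf ⊢
    exact fun i j hij ↦ Fin.pred_le_pred_iff.2 (hf.1 hij)
  · intro g _
    funext i
    simp
  · intro f _
    funext i
    simp
  · intro g _
    simp [Fin.tail]

theorem mul_completeHomogeneous_eq_sum (n d : ℕ) (z : Fin (n + 1) → K) :
    z 0 * completeHomogeneous (n + 1) d z =
      ∑ f ∈ (univ.filter Monotone).filter (fun f : Fin (d + 1) → Fin (n + 1) ↦ f 0 = 0),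
        ∏ i, z (f i) := by
  rw [completeHomogeneous, mul_sum]
  refine sum_nbij' (fun g ↦ Fin.cons 0 g) Fin.tail ?_ ?_ ?_ ?_ ?_
  · intro g hg
    simp only [mem_filter, mem_univ, true_and] at hg ⊢
    exact ⟨Fin.monotone_cons_zero.2 hg, rfl⟩
  · intro f hf
    simp only [mem_filter, mem_univ, true_and] at hf ⊢
    exact hf.1.comp Fin.strictMono_succ.monotone
  · intro g _
    exact Fin.tail_cons _ _
  · intro f hf
    simp only [mem_filter, mem_univ, true_and] at hf
    rw [← hf.2, Fin.cons_self_tail]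
  · intro g _
    simp [Fin.prod_univ_succ]

theorem completeHomogeneous_succ_succ (n d : ℕ) (z : Fin (n + 1) → K) :
    completeHomogeneous (n + 1) (d + 1) z =
      completeHomogeneous n (d + 1) (Fin.tail z) + z 0 * completeHomogeneous (n + 1) d z := by
  rw [completeHomogeneous_tail_eq_sum, mul_completeHomogeneous_eq_sum, completeHomogeneous,
    sum_filter_not_add_sum_filter]

end CompleteHomogeneous

section DividedDifference

variable {K : Type*} [Field K] {n : ℕ}

def dividedDifference (f : K → K) (z : Fin n → K) : K :=
  ∑ j, f (z j) / ∏ i ∈ univ.erase j, (z j - z i)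

theorem dividedDifference_eval_eq_coeff {z : Fin n → K} (hz : Injective z) {P : K[X]}
    (hP : P.degree < n) : dividedDifference P.eval z = P.coeff (n - 1) := by
  simpa [dividedDifference] using
    (Lagrange.coeff_eq_sum (s := univ) hz.injOn (by simpa using hP)).symm

theorem dividedDifference_pow_of_lt {z : Fin n → K} (hz : Injective z) {m : ℕ} (hm : m < n) :
    dividedDifference (· ^ m) z = if m + 1 = n then 1 else 0 := by
  have hdeg : (X ^ m : K[X]).degree < n := by simpa using WithBot.coe_lt_coe.2 hm
  simpa [coeff_X_pow, show n - 1 = m ↔ m + 1 = n by omega] using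
    dividedDifference_eval_eq_coeff hz hdeg

theorem dividedDifference_mul_id (f : K → K) (z : Fin (n + 1) → K)
    (hz : ∀ i : Fin n, z i.succ ≠ z 0) :
    dividedDifference (fun x ↦ x * f x) z =
      dividedDifference f (Fin.tail z) + z 0 * dividedDifference f z := by
  refine eq_add_of_sub_eq ?_
  rw [dividedDifference, dividedDifference, dividedDifference, mul_sum, ← sum_sub_distrib,
    Fin.sum_univ_succ, mul_div_assoc, sub_self, zero_add]
  refine sum_congr rfl fun k _ ↦ ?_
  rw [Fin.prod_univ_erase_succ]
  simp only [Fin.tail]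
  have hk : z k.succ - z 0 ≠ 0 := sub_ne_zero.2 (hz k)
  field_simp

-- `d = m + 1 - n` without truncated subtraction, so that the empty family is the base case.
theorem dividedDifference_pow {z : Fin n → K} (hz : Injective z) {m d : ℕ} (h : m + 1 = n + d) :
    dividedDifference (· ^ m) z = completeHomogeneous n d z := by
  induction n generalizing m d with
  | zero =>
    obtain rfl : d = m + 1 := by omega
    simp [dividedDifference, completeHomogeneous_zero_succ]
  | succ n ihn =>
    induction d generalizing m with
    | zero =>
      rw [show m = n by omega, dividedDifference_pow_of_lt hz (Nat.lt_succ_self n), if_pos rfl,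
        completeHomogeneous_zero_right]
    | succ d ihd =>
      obtain rfl : m = n + d + 1 := by omega
      simp only [pow_succ']
      rw [dividedDifference_mul_id _ _ fun i h ↦ Fin.succ_ne_zero i (hz h),
        ihn (z := Fin.tail z) (m := n + d) (d := d + 1) (hz.comp (Fin.succ_injective n)) rfl,
        ihd (by omega), completeHomogeneous_succ_succ]

end DividedDifference

/-- Localization-type identity: for pairwise distinct `z₁,...,z_n` in a field and `m ≥ 0`,
`Σ_{j=1}^n z_j^m / ∏_{i≠j} (z_j - z_i)` equals `0` if `m < n-1`, equals `1` if `m = n-1`,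
and equals the complete homogeneous symmetric polynomial `h_{m-n+1}(z)` if `m ≥ n-1`. -/
theorem sum_pow_div_prod_sub (K : Type*) [Field K] (n : ℕ) (hn : 0 < n)
    (z : Fin n → K) (hz : Function.Injective z) (m : ℕ) :
    (m < n - 1 → ∑ j : Fin n, z j ^ m / ∏ i ∈ Finset.univ.erase j, (z j - z i) = 0) ∧
    (m = n - 1 → ∑ j : Fin n, z j ^ m / ∏ i ∈ Finset.univ.erase j, (z j - z i) = 1) ∧
    (n - 1 ≤ m → ∑ j : Fin n, z j ^ m / ∏ i ∈ Finset.univ.erase j, (z j - z i) =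
      completeHomogeneous n (m - (n - 1)) z) := by
  refine ⟨fun hm ↦ ?_, fun hm ↦ ?_, fun hm ↦ dividedDifference_pow hz (by omega)⟩
  · exact (dividedDifference_pow_of_lt hz (by omega)).trans (if_neg (by omega))
  · exact (dividedDifference_pow_of_lt hz (by omega)).trans (if_pos (by omega))
end
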